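/- Let A ∈ ℝ^{n×n}, C ∈ ℝ^{p×n}, and let Ū ∈ St(r,n) satisfy (I_n − ŪŪᵀ)·A·Ū = 0. Suppose the pair (A, C) is observable, i.e., for every nonzero x ∈ ℝⁿ there exists t ≥ 0 with C·exp(t·A)·x ≠ 0. Then the reduced pair (ŪᵀAŪ, CŪ) is observable: for every nonzero z ∈ ℝʳ there exists t ≥ 0 with (CŪ)·exp(t·ŪᵀAŪ)·z ≠ 0. -/

import Mathlib

/-!
The equilibrium condition says that `A Ub = Ub (Ubᵀ A Ub)`: the column space of `Ub` is
`A`-invariant. This intertwining passes to all powers and hence to the exponential series, so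
`exp (t A) Ub = Ub exp (t Ubᵀ A Ub)`. The reduced output from `z` is therefore the full output
from `Ub z`, which is nonzero because `Ub` has the left inverse `Ubᵀ`.
-/

open Matrix NormedSpace

namespace Matrix

variable {m n : Type*} [Fintype m] [Fintype n]

theorem pow_mul_eq_mul_pow_of_mul_eq_mul [DecidableEq m] [DecidableEq n] {R : Type*}
    [Semiring R] {A : Matrix m m R} {B : Matrix n n R} {X : Matrix m n R}
    (h : A * X = X * B) (k : ℕ) : A ^ k * X = X * B ^ k := by
  induction k with
  | zero => simp
  | succ k ih => rw [pow_succ, pow_succ, Matrix.mul_assoc, h, ← Matrix.mul_assoc, ih,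
      Matrix.mul_assoc]

theorem exp_mul_eq_mul_exp_of_mul_eq_mul [DecidableEq m] [DecidableEq n] {A : Matrix m m ℝ}
    {B : Matrix n n ℝ} {X : Matrix m n ℝ} (h : A * X = X * B) : exp A * X = X * exp B := by
  -- `exp` does not depend on the norm; any algebra norm makes its series converge.
  let : NormedRing (Matrix m m ℝ) := Matrix.linftyOpNormedRing
  let : NormedAlgebra ℝ (Matrix m m ℝ) := Matrix.linftyOpNormedAlgebra
  let : NormedRing (Matrix n n ℝ) := Matrix.linftyOpNormedRing
  let : NormedAlgebra ℝ (Matrix n n ℝ) := Matrix.linftyOpNormedAlgebra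
  have hA := (exp_series_hasSum_exp' (𝕂 := ℝ) A).map (mulRightLinearMap m ℝ X).toAddMonoidHom
    (continuous_id.matrix_mul continuous_const)
  have hB := (exp_series_hasSum_exp' (𝕂 := ℝ) B).map (mulLeftLinearMap n ℝ X).toAddMonoidHom
    (continuous_const.matrix_mul continuous_id)
  simp only [Function.comp_def, LinearMap.toAddMonoidHom_coe, mulRightLinearMap_apply,
    mulLeftLinearMap_apply, Matrix.smul_mul, Matrix.mul_smul,
    pow_mul_eq_mul_pow_of_mul_eq_mul h] at hA hB
  exact hA.unique hB

theorem exp_smul_mul_eq_mul_exp_smul_of_mul_eq_mul [DecidableEq m] [DecidableEq n]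
    {A : Matrix m m ℝ} {B : Matrix n n ℝ} {X : Matrix m n ℝ} (h : A * X = X * B) (t : ℝ) :
    exp (t • A) * X = X * exp (t • B) :=
  exp_mul_eq_mul_exp_of_mul_eq_mul <| by rw [Matrix.smul_mul, Matrix.mul_smul, h]

theorem mul_eq_mul_of_one_sub_mul_mul_mul_eq_zero [DecidableEq m] {R : Type*} [Ring R]
    {A : Matrix m m R} {U : Matrix m n R} {V : Matrix n m R} (h : (1 - U * V) * A * U = 0) :
    A * U = U * (V * A * U) := by
  rw [Matrix.sub_mul, Matrix.sub_mul, Matrix.one_mul, sub_eq_zero] at h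
  rw [h]
  simp only [Matrix.mul_assoc]

theorem mulVec_ne_zero_of_mul_eq_one [DecidableEq n] {R : Type*} [CommSemiring R]
    {U : Matrix m n R} {V : Matrix n m R} (h : V * U = 1) {z : n → R} (hz : z ≠ 0) :
    U *ᵥ z ≠ 0 := by
  intro hUz
  have hVUz := congrArg (V *ᵥ ·) hUz
  rw [mulVec_mulVec, h, one_mulVec, mulVec_zero] at hVUz
  exact hz hVUz

end Matrix

theorem reduced_pair_observable_general
    (n r p : ℕ)
    (A : Matrix (Fin n) (Fin n) ℝ) (C : Matrix (Fin p) (Fin n) ℝ)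
    (Ub : Matrix (Fin n) (Fin r) ℝ) (hUbst : Ubᵀ * Ub = 1)
    (hUbeq : (1 - Ub * Ubᵀ) * A * Ub = 0)
    (hobs : ∀ x : Fin n → ℝ, x ≠ 0 →
      ∃ t : ℝ, 0 ≤ t ∧ C.mulVec ((exp (t • A)).mulVec x) ≠ 0) :
    ∀ z : Fin r → ℝ, z ≠ 0 →
      ∃ t : ℝ, 0 ≤ t ∧ (C * Ub).mulVec ((exp (t • (Ubᵀ * A * Ub))).mulVec z) ≠ 0 := by
  intro z hz
  obtain ⟨t, ht, hCx⟩ := hobs (Ub *ᵥ z) (mulVec_ne_zero_of_mul_eq_one hUbst hz)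
  have hexp := exp_smul_mul_eq_mul_exp_smul_of_mul_eq_mul
    (mul_eq_mul_of_one_sub_mul_mul_mul_eq_zero hUbeq) t
  refine ⟨t, ht, ?_⟩
  rwa [mulVec_mulVec, mulVec_mulVec, Matrix.mul_assoc C, hexp, ← Matrix.mul_assoc,
    ← mulVec_mulVec] at hCx

/-- (Observability is inherited by the reduced model.) If `Ub ∈ St(r,n)`
is an equilibrium of the Oja flow for `A` and the pair `(A, C)` is observable, then the
reduced pair `(UbᵀAUb, CUb)` is observable. -/
theorem reduced_pair_observable
    (n r p : ℕ) (hr : 1 ≤ r) (hrn : r ≤ n)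
    (A : Matrix (Fin n) (Fin n) ℝ) (C : Matrix (Fin p) (Fin n) ℝ)
    (Ub : Matrix (Fin n) (Fin r) ℝ) (hUbst : Ubᵀ * Ub = 1)
    (hUbeq : (1 - Ub * Ubᵀ) * A * Ub = 0)
    (hobs : ∀ x : Fin n → ℝ, x ≠ 0 →
      ∃ t : ℝ, 0 ≤ t ∧ C.mulVec ((exp (t • A)).mulVec x) ≠ 0) :
    ∀ z : Fin r → ℝ, z ≠ 0 →
      ∃ t : ℝ, 0 ≤ t ∧ (C * Ub).mulVec ((exp (t • (Ubᵀ * A * Ub))).mulVec z) ≠ 0 :=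
  reduced_pair_observable_general n r p A C Ub hUbst hUbeq hobs
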